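/- Covering property of the normalizing transformation (coupled case). Under the hypotheses of the stability lemma in the small-κ case, the real analytic symplectic transformation Ψ: D_{2r}→D_{3r} produced by the normal form lemma (with |Ψ−id|_{2r} ≤ μ = (18mr₂/r₁)εT) satisfies Ψ(D^{real}_{5r/3}) ⊇ D^{real}_r, where D^{real}_r = D_r ∩ (ℝ^{2n}×ℝ^{2N}). -/

import Mathlib

noncomputable section

open scoped BigOperators
open Real

/-- Complex phase space: `n` conjugate pairs. -/
abbrev CVec (n : ℕ) := Fin n → ℂ × ℂ

/-- Real phase space: `n` conjugate pairs. -/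
abbrev RVec (n : ℕ) := Fin n → ℝ × ℝ

/-- Embedding of the real phase space into the complex one. -/
def embedR {n : ℕ} (z : RVec n) : CVec n := fun j => (((z j).1 : ℂ), ((z j).2 : ℂ))

/-- The (complex) action `I_j(z) = (x_j^2 + y_j^2)/2`. -/
def cAction {n : ℕ} (z : CVec n) (j : Fin n) : ℂ := ((z j).1 ^ 2 + (z j).2 ^ 2) / 2

/-- `|I(z) - I⁰| = ∑_j |I_j(z) - I⁰_j|`. -/
def cActionDist {n : ℕ} (z : CVec n) (I0 : Fin n → ℝ) : ℝ :=
  ∑ j, ‖cAction z j - (I0 j : ℂ)‖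

/-- Square of the euclidean norm on the complex phase space. -/
def cNormSq {n : ℕ} (z : CVec n) : ℝ :=
  ∑ j, (‖(z j).1‖ ^ 2 + ‖(z j).2‖ ^ 2)

/-- Euclidean norm on the complex phase space. -/
def cNorm {n : ℕ} (z : CVec n) : ℝ := Real.sqrt (cNormSq z)

/-- The `z`-only domain `D_{r₁,r₂} = {z ∈ ℂ^{2n} : |I(z) − I⁰| < r₁, |z| < r₂}`. -/
def DomZ {n : ℕ} (I0 : Fin n → ℝ) (r : ℝ × ℝ) : Set (CVec n) :=
  {z | cActionDist z I0 < r.1 ∧ cNorm z < r.2}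

/-- A vector in `ℂ^{2n}` is real if all its components are. -/
def IsRealVec {n : ℕ} (z : CVec n) : Prop := ∀ j, ((z j).1.im = 0 ∧ (z j).2.im = 0)

/-- The (real) action `I_j(z) = (x_j^2 + y_j^2)/2`. -/
def rAction {n : ℕ} (z : RVec n) (j : Fin n) : ℝ := ((z j).1 ^ 2 + (z j).2 ^ 2) / 2

/-- Square of the euclidean norm. -/
def rNormSq {n : ℕ} (z : RVec n) : ℝ := ∑ j, ((z j).1 ^ 2 + (z j).2 ^ 2)

/-- Euclidean norm. -/
def rNorm {n : ℕ} (z : RVec n) : ℝ := Real.sqrt (rNormSq z)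

/-- Basis vector in the `x_j` direction. -/
def rex {n : ℕ} (j : Fin n) : RVec n := Function.update (0 : RVec n) j (1, 0)

/-- Basis vector in the `y_j` direction. -/
def rey {n : ℕ} (j : Fin n) : RVec n := Function.update (0 : RVec n) j (0, 1)

/-- Hamiltonian vector field of `H` on `ℝ^{2n} × ℝ^{2N}` (standard symplectic structure). -/
def rHamVF {n N : ℕ} (H : RVec n × RVec N → ℝ) (p : RVec n × RVec N) : RVec n × RVec N :=
  (fun j => (fderiv ℝ H p (rey j, 0), -(fderiv ℝ H p (rex j, 0))),
   fun j => (fderiv ℝ H p ((0 : RVec n), rey j), -(fderiv ℝ H p ((0 : RVec n), rex j))))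

/-- Integral curve of the Hamiltonian `H` on `ℝ^{2n} × ℝ^{2N}`. -/
def IsHamCurve {n N : ℕ} (H : RVec n × RVec N → ℝ) (γ : ℝ → RVec n × RVec N) : Prop :=
  ∀ t : ℝ, HasDerivAt γ (rHamVF H (γ t)) t

/-- `l¹` norm on `ℝⁿ`. -/
def l1Norm {n : ℕ} (v : Fin n → ℝ) : ℝ := ∑ j, |v j|

/-- Operator norm of a matrix with respect to the `l¹` norm. -/
def l1OpNorm {n : ℕ} (A : Matrix (Fin n) (Fin n) ℝ) : ℝ :=
  sInf {c | 0 ≤ c ∧ ∀ v, l1Norm (A.mulVec v) ≤ c * l1Norm v}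

/-- The euclidean norm of a frequency vector. -/
def euclNorm {n : ℕ} (ω : Fin n → ℝ) : ℝ := Real.sqrt (∑ j, (ω j) ^ 2)

/-- The real quadratic part `½⟨A(I(z) − I⁰), I(z) − I⁰⟩`. -/
def quadAR {n : ℕ} (A : Matrix (Fin n) (Fin n) ℝ) (I0 : Fin n → ℝ) (z : RVec n) : ℝ :=
  (1 / 2) * ∑ i, ∑ j, A i j * (rAction z i - I0 i) * (rAction z j - I0 j)

/-- The coupled domain `D_{r₁,r₂,r₃} ⊆ ℂ^{2n} × ℂ^{2N}`. -/
def Dom {n N : ℕ} (I0 : Fin n → ℝ) (r : ℝ × ℝ × ℝ) : Set (CVec n × CVec N) :=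
  {p | cActionDist p.1 I0 < r.1 ∧ cNorm p.1 < r.2.1 ∧ cNorm p.2 < r.2.2}

/-- Euclidean norm on a product `ℂ^{2n} × ℂ^{2N}`. -/
def pNorm {n N : ℕ} (p : CVec n × CVec N) : ℝ := Real.sqrt (cNormSq p.1 + cNormSq p.2)

/-- The standard symplectic form on `ℂ^{2n} × ℂ^{2N}`. -/
def symForm {n N : ℕ} (u v : CVec n × CVec N) : ℂ :=
  (∑ j, ((u.1 j).1 * (v.1 j).2 - (u.1 j).2 * (v.1 j).1))
  + ∑ j : Fin N, ((u.2 j).1 * (v.2 j).2 - (u.2 j).2 * (v.2 j).1)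

/-- A transformation is symplectic on `s` if its derivative preserves the symplectic form. -/
def IsSymplecticOn {n N : ℕ} (Φ : CVec n × CVec N → CVec n × CVec N)
    (s : Set (CVec n × CVec N)) : Prop :=
  ∀ p ∈ s, ∀ u v, symForm (fderiv ℂ Φ p u) (fderiv ℂ Φ p v) = symForm u v

/-!
On `D_{2r}` the map `Ψ` is within `μ = 18 m r₂ εT / r₁` of the identity. By the Schwarz lemma,
`Ψ - id`, holomorphic and bounded by `μ` on a ball, is `2μ/ρ`-Lipschitz on the ball shrunk by
`ρ`, so for a real `w ∈ D_r` the map `p ↦ p + (w - Ψ p)` is a contraction of the real vectors in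
the closed `μ`-ball around `w` (in the euclidean norm `pNorm`). Its fixed point is a real
preimage of `w` within `μ` of `w`, and the smallness condition on `m² ε T` makes `μ` small
enough, compared with `r₁ / r₂`, for that ball to lie in `D_{5r/3}`.
-/

open Metric Set

section ContractionNearIdentity

variable {E F : Type*} [NormedAddCommGroup E] [NormedSpace ℂ E]
  [NormedAddCommGroup F] [NormedSpace ℂ F]

theorem dist_le_two_mul_div_mul_dist_of_norm_le {f : E → F} {c : E} {s ρ M : ℝ} (hρ : 0 < ρ)
    (hf : DifferentiableOn ℂ f (ball c (s + ρ))) (hM : ∀ x ∈ ball c (s + ρ), ‖f x‖ ≤ M)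
    {x y : E} (hx : x ∈ closedBall c s) (hy : y ∈ closedBall c s) :
    dist (f y) (f x) ≤ 2 * M / ρ * dist y x := by
  have hs : closedBall c s ⊆ ball c (s + ρ) := closedBall_subset_ball (by linarith)
  have hsub : ball x ρ ⊆ ball c (s + ρ) :=
    ball_subset_ball' (by linarith [mem_closedBall.mp hx])
  have hosc : ∀ z ∈ ball c (s + ρ), dist (f z) (f x) ≤ 2 * M := fun z hz =>
    (dist_le_norm_add_norm _ _).trans (by linarith [hM z hz, hM x (hs hx)])
  rcases lt_or_ge (dist y x) ρ with hyx | hyx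
  · exact Complex.dist_le_div_mul_dist_of_mapsTo_ball (hf.mono hsub)
      (fun z hz => mem_closedBall.mpr (hosc z (hsub hz))) hyx
  · have hM₀ : 0 ≤ M := (norm_nonneg _).trans (hM x (hs hx))
    calc dist (f y) (f x) ≤ 2 * M := hosc y (hs hy)
      _ ≤ 2 * M / ρ * dist y x := by
        rw [div_mul_eq_mul_div, le_div_iff₀ hρ]
        exact mul_le_mul_of_nonneg_left hyx (by linarith)

theorem exists_apply_eq_of_norm_sub_self_le [CompleteSpace E] {Φ : E → E}
    {S : AddSubgroup E} (hS : IsClosed (S : Set E)) {w : E} (hw : w ∈ S) {μ ρ : ℝ}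
    (hμ : 0 ≤ μ) (hρ : 2 * μ < ρ) (hΦ : DifferentiableOn ℂ Φ (ball w (μ + ρ)))
    (hΦS : ∀ x ∈ S, x ∈ ball w (μ + ρ) → Φ x ∈ S)
    (hΦμ : ∀ x ∈ ball w (μ + ρ), ‖Φ x - x‖ ≤ μ) :
    ∃ p ∈ S, p ∈ closedBall w μ ∧ Φ p = w := by
  have hρ₀ : 0 < ρ := by linarith
  have hball : closedBall w μ ⊆ ball w (μ + ρ) := closedBall_subset_ball (by linarith)
  set s : Set E := S ∩ closedBall w μ
  let G : E → E := fun x => x + (w - Φ x)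
  have hGs : MapsTo G s s := fun x ⟨hxS, hxw⟩ => by
    refine ⟨S.add_mem hxS (S.sub_mem hw (hΦS x hxS (hball hxw))), ?_⟩
    rw [mem_closedBall, dist_eq_norm, show G x - w = -(Φ x - x) by simp only [G]; abel, norm_neg]
    exact hΦμ x (hball hxw)
  have hG : LipschitzOnWith (2 * μ / ρ).toNNReal G s := by
    refine LipschitzOnWith.of_dist_le' fun x hx y hy => ?_
    calc dist (G x) (G y) = dist (Φ x - x) (Φ y - y) := by
          rw [dist_comm]; simp only [dist_eq_norm, G]; congr 1; abel
      _ ≤ 2 * μ / ρ * dist x y :=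
          dist_le_two_mul_div_mul_dist_of_norm_le (f := fun z => Φ z - z) hρ₀
            (hΦ.sub differentiableOn_id) hΦμ hy.2 hx.2
  have hK : (2 * μ / ρ).toNNReal < 1 := by
    rw [Real.toNNReal_lt_one, div_lt_one hρ₀]; exact hρ
  obtain ⟨p, ⟨hpS, hpw⟩, hfix, -⟩ := ContractingWith.exists_fixedPoint'
    (hS.inter isClosed_closedBall).isComplete hGs ⟨hK, hG.mapsToRestrict hGs⟩
    (⟨hw, mem_closedBall_self hμ⟩ : w ∈ s) (edist_ne_top _ _)
  refine ⟨p, hpS, hpw, ?_⟩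
  have : p + (w - Φ p) = p := hfix
  rwa [add_eq_left, sub_eq_zero, eq_comm] at this

end ContractionNearIdentity

theorem EuclideanSpace.sum_norm_mul_norm_le {ι : Type*} [Fintype ι] (x y : EuclideanSpace ℂ ι) :
    ∑ i, ‖x i‖ * ‖y i‖ ≤ ‖x‖ * ‖y‖ := by
  simpa only [EuclideanSpace.norm_eq] using
    Real.sum_mul_le_sqrt_mul_sqrt Finset.univ (fun i => ‖x i‖) (fun i => ‖y i‖)

namespace CVec

variable {n : ℕ}

def toEuclidean (n : ℕ) : CVec n ≃L[ℂ] EuclideanSpace ℂ (Fin n ⊕ Fin n) :=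
  LinearEquiv.toContinuousLinearEquiv
    { toFun := fun z => WithLp.toLp 2 (Sum.elim (fun j => (z j).1) (fun j => (z j).2))
      invFun := fun x j => (x (Sum.inl j), x (Sum.inr j))
      map_add' := fun z z' => by ext (j | j) <;> rfl
      map_smul' := fun c z => by ext (j | j) <;> rfl
      left_inv := fun z => rfl
      right_inv := fun x => by ext (j | j) <;> rfl }

@[simp] lemma toEuclidean_inl (z : CVec n) (j : Fin n) : toEuclidean n z (Sum.inl j) = (z j).1 :=
  rfl

@[simp] lemma toEuclidean_inr (z : CVec n) (j : Fin n) : toEuclidean n z (Sum.inr j) = (z j).2 :=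
  rfl

lemma cNorm_eq_norm_toEuclidean (z : CVec n) : cNorm z = ‖toEuclidean n z‖ := by
  simp [cNorm, cNormSq, EuclideanSpace.norm_eq, Fintype.sum_sum_type, Finset.sum_add_distrib]

lemma cNormSq_nonneg (z : CVec n) : 0 ≤ cNormSq z := by
  unfold cNormSq; positivity

lemma sq_cNorm (z : CVec n) : cNorm z ^ 2 = cNormSq z := Real.sq_sqrt (cNormSq_nonneg z)

lemma cNorm_nonneg (z : CVec n) : 0 ≤ cNorm z := Real.sqrt_nonneg _

lemma cNorm_add_le (u v : CVec n) : cNorm (u + v) ≤ cNorm u + cNorm v := by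
  simpa only [cNorm_eq_norm_toEuclidean, map_add] using norm_add_le _ _

lemma cAction_sub_cAction (u v : CVec n) (j : Fin n) :
    cAction u j - cAction v j = (((u j).1 - (v j).1) * ((u j).1 + (v j).1)
      + ((u j).2 - (v j).2) * ((u j).2 + (v j).2)) / 2 := by
  simp only [cAction]; ring

lemma cActionDist_le (u v : CVec n) (I0 : Fin n → ℝ) :
    cActionDist u I0 ≤ cActionDist v I0 + cNorm (u - v) * cNorm (u + v) / 2 := by
  have hsum : ∑ j, ‖cAction u j - cAction v j‖ ≤ cNorm (u - v) * cNorm (u + v) / 2 := by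
    rw [cNorm_eq_norm_toEuclidean, cNorm_eq_norm_toEuclidean]
    refine le_trans ?_ (div_le_div_of_nonneg_right
      (EuclideanSpace.sum_norm_mul_norm_le _ _) zero_le_two)
    simp only [Fintype.sum_sum_type, ← Finset.sum_add_distrib, Finset.sum_div]
    refine Finset.sum_le_sum fun j _ => ?_
    rw [cAction_sub_cAction, norm_div, Complex.norm_two]
    gcongr
    exact (norm_add_le _ _).trans_eq (by rw [norm_mul, norm_mul]; rfl)
  calc cActionDist u I0 ≤ ∑ j, (‖cAction u j - cAction v j‖ + ‖cAction v j - (I0 j : ℂ)‖) :=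
        Finset.sum_le_sum fun j _ => norm_sub_le_norm_sub_add_norm_sub _ (cAction v j) _
    _ ≤ cActionDist v I0 + cNorm (u - v) * cNorm (u + v) / 2 := by
        rw [Finset.sum_add_distrib, add_comm]; exact add_le_add le_rfl hsum

def realVecs (n : ℕ) : AddSubgroup (CVec n) where
  carrier := {z | IsRealVec z}
  add_mem' ha hb j := by simp [(ha j).1, (hb j).1, (ha j).2, (hb j).2]
  zero_mem' j := by simp
  neg_mem' ha j := by simp [(ha j).1, (ha j).2]

lemma isClosed_realVecs : IsClosed (realVecs n : Set (CVec n)) := by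
  have : (realVecs n : Set (CVec n)) =
      ⋂ j, ({z | (z j).1.im = 0} ∩ {z | (z j).2.im = 0}) := by
    ext z; simp [realVecs, IsRealVec]
  rw [this]
  exact isClosed_iInter fun j =>
    (isClosed_eq (by fun_prop) continuous_const).inter (isClosed_eq (by fun_prop) continuous_const)

end CVec

open CVec

variable {n N : ℕ}

def phaseToL2 (n N : ℕ) : (CVec n × CVec N) ≃L[ℂ]
    WithLp 2 (EuclideanSpace ℂ (Fin n ⊕ Fin n) × EuclideanSpace ℂ (Fin N ⊕ Fin N)) :=
  ((toEuclidean n).prodCongr (toEuclidean N)).trans (WithLp.prodContinuousLinearEquiv 2 ℂ _ _).symm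

lemma pNorm_eq_norm_phaseToL2 (p : CVec n × CVec N) : pNorm p = ‖phaseToL2 n N p‖ := by
  rw [WithLp.prod_norm_eq_of_L2, pNorm, ← sq_cNorm, ← sq_cNorm, cNorm_eq_norm_toEuclidean,
    cNorm_eq_norm_toEuclidean]
  rfl

lemma pNorm_nonneg (p : CVec n × CVec N) : 0 ≤ pNorm p := Real.sqrt_nonneg _

lemma cNorm_fst_le_pNorm (p : CVec n × CVec N) : cNorm p.1 ≤ pNorm p :=
  Real.sqrt_le_sqrt (le_add_of_nonneg_right (cNormSq_nonneg _))

lemma cNorm_snd_le_pNorm (p : CVec n × CVec N) : cNorm p.2 ≤ pNorm p :=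
  Real.sqrt_le_sqrt (le_add_of_nonneg_left (cNormSq_nonneg _))

theorem exists_pNorm_sub_le_apply_eq {Ψ : CVec n × CVec N → CVec n × CVec N}
    {w : CVec n × CVec N} (hw : w ∈ (realVecs n).prod (realVecs N)) {μ ρ : ℝ} (hμ : 0 ≤ μ)
    (hρ : 2 * μ < ρ) (hΨ : DifferentiableOn ℂ Ψ {p | pNorm (p - w) < μ + ρ})
    (hΨreal : ∀ p ∈ (realVecs n).prod (realVecs N), pNorm (p - w) < μ + ρ →
      Ψ p ∈ (realVecs n).prod (realVecs N))
    (hΨμ : ∀ p, pNorm (p - w) < μ + ρ → pNorm (Ψ p - p) ≤ μ) :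
    ∃ p ∈ (realVecs n).prod (realVecs N), pNorm (p - w) ≤ μ ∧ Ψ p = w := by
  set e := phaseToL2 n N
  have hdist : ∀ x, dist x (e w) = pNorm (e.symm x - w) := fun x => by
    rw [pNorm_eq_norm_phaseToL2, map_sub, ContinuousLinearEquiv.apply_symm_apply, dist_eq_norm]
  have hball : ∀ x ∈ ball (e w) (μ + ρ), pNorm (e.symm x - w) < μ + ρ := fun x hx => by
    rwa [mem_ball, hdist] at hx
  obtain ⟨x, hxS, hxw, hfix⟩ := exists_apply_eq_of_norm_sub_self_le (Φ := e ∘ Ψ ∘ e.symm)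
    (S := ((realVecs n).prod (realVecs N)).comap e.symm.toLinearEquiv.toAddMonoidHom)
    ((isClosed_realVecs.prod isClosed_realVecs).preimage e.symm.continuous)
    (by simpa using hw) hμ hρ
    (e.differentiable.comp_differentiableOn (hΨ.comp e.symm.differentiable.differentiableOn hball))
    (fun x hx hxb => by simpa using hΨreal _ hx (hball x hxb))
    (fun x hxb => by
      have := hΨμ _ (hball x hxb)
      rwa [pNorm_eq_norm_phaseToL2, map_sub, ContinuousLinearEquiv.apply_symm_apply] at this)
  refine ⟨e.symm x, hxS, ?_, ?_⟩
  · rwa [mem_closedBall, hdist] at hxw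
  · simpa using congrArg e.symm hfix

lemma mem_Dom_of_pNorm_sub_le {I0 : Fin n → ℝ} {r s : ℝ × ℝ × ℝ} {w p : CVec n × CVec N}
    (hw : w ∈ Dom I0 r) {δ : ℝ} (hp : pNorm (p - w) ≤ δ)
    (h₁ : r.1 + δ * (δ + 2 * r.2.1) / 2 ≤ s.1) (h₂ : r.2.1 + δ ≤ s.2.1)
    (h₃ : r.2.2 + δ ≤ s.2.2) : p ∈ Dom I0 s := by
  obtain ⟨hwI, hw₁, hw₂⟩ := hw
  have hd₁ : cNorm (p.1 - w.1) ≤ δ := (cNorm_fst_le_pNorm (p - w)).trans hp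
  have hd₂ : cNorm (p.2 - w.2) ≤ δ := (cNorm_snd_le_pNorm (p - w)).trans hp
  have hδ : 0 ≤ δ := (cNorm_nonneg _).trans hd₁
  have hsum : cNorm (p.1 + w.1) ≤ δ + 2 * cNorm w.1 := by
    have := cNorm_add_le (p.1 - w.1) (w.1 + w.1)
    rw [sub_add_add_cancel] at this
    linarith [cNorm_add_le w.1 w.1]
  have hprod : cNorm (p.1 - w.1) * cNorm (p.1 + w.1) ≤ δ * (δ + 2 * r.2.1) :=
    mul_le_mul hd₁ (by linarith) (cNorm_nonneg _) hδ
  have hp₁ := cNorm_add_le (p.1 - w.1) w.1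
  have hp₂ := cNorm_add_le (p.2 - w.2) w.2
  rw [sub_add_cancel] at hp₁ hp₂
  refine ⟨?_, by linarith, by linarith⟩
  linarith [cActionDist_le p.1 w.1 I0]

lemma mem_Dom_smul_of_pNorm_sub_le {I0 : Fin n → ℝ} {r : ℝ × ℝ × ℝ} {w p : CVec n × CVec N}
    (hw : w ∈ Dom I0 r) (hr₁ : r.1 < r.2.1 ^ 2 / 4) (hr₂ : r.1 < 2 * r.2.1 * r.2.2)
    {s δ : ℝ} (hs : s ≤ 2) (hδ : 3 * r.2.1 * δ ≤ (s - 1) * r.1) (hp : pNorm (p - w) ≤ δ) :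
    p ∈ Dom I0 (s * r.1, s * r.2.1, s * r.2.2) := by
  have hr : 0 < r.2.1 := (cNorm_nonneg _).trans_lt hw.2.1
  have hδ₀ : 0 ≤ δ := (pNorm_nonneg _).trans hp
  have hr₀ : 0 < r.1 := (Finset.sum_nonneg fun j _ => norm_nonneg _).trans_lt hw.1
  have hs₁ : 0 ≤ s - 1 := nonneg_of_mul_nonneg_left (by nlinarith) hr₀
  have hδ₂ : δ ≤ (s - 1) * r.2.1 :=
    le_of_mul_le_mul_left (by nlinarith [mul_le_mul_of_nonneg_left hr₁.le hs₁]) hr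
  have hδ₃ : δ ≤ (s - 1) * r.2.2 :=
    le_of_mul_le_mul_left (by nlinarith [mul_le_mul_of_nonneg_left hr₂.le hs₁]) hr
  have hδr : δ ≤ r.2.1 := hδ₂.trans (by nlinarith)
  refine mem_Dom_of_pNorm_sub_le hw hp ?_ (by dsimp only; linarith) (by dsimp only; linarith)
  dsimp only
  nlinarith [mul_le_mul_of_nonneg_left hδr hδ₀]

lemma mul_mul_div_mul_le_of_sq_mul_lt (m : ℕ) {η r₁ r₂ : ℝ} (hη : 0 ≤ η) (hr₁ : 0 < r₁)
    (h : (m : ℝ) ^ 2 * η * r₂ ^ 2 < 1 / 3888 * r₁ ^ 2) :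
    216 * r₂ * (18 * m * r₂ / r₁ * η) ≤ r₁ := by
  have hm : (m : ℝ) ≤ (m : ℝ) ^ 2 := by exact_mod_cast Nat.le_self_pow two_ne_zero m
  rw [show 216 * r₂ * (18 * m * r₂ / r₁ * η) = 3888 * (m * η * r₂ ^ 2) / r₁ by ring,
    div_le_iff₀ hr₁]
  nlinarith [mul_le_mul_of_nonneg_right hm (by positivity : 0 ≤ η * r₂ ^ 2)]

theorem covering_normalizing_map_coupled_general (n N : ℕ) (I0 : Fin n → ℝ)
    (A : Matrix (Fin n) (Fin n) ℝ) (M T ε : ℝ) (r : ℝ × ℝ × ℝ) (m : ℕ)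
    (Ψ : CVec n × CVec N → CVec n × CVec N)
    (hT : 0 < T) (hε : 0 < ε)
    (hr : 0 < r.1 ∧ 0 < r.2.1 ∧ 0 < r.2.2)
    -- hypotheses of the small-κ stability lemma
    (hc1 : r.1 < min (r.2.1 ^ 2 / 4) (2 * r.2.1 * r.2.2))
    (hc6 : (m : ℝ) ^ 2 * ε * T <
      min (1 / 3888) (1 / (480 * Real.sqrt (M * l1OpNorm A))) * r.1 ^ 2 / r.2.1 ^ 2)
    -- Ψ is the real analytic symplectic transformation from the normal form lemma
    (hΨana : AnalyticOnNhd ℂ Ψ (Dom I0 (2 * r.1, 2 * r.2.1, 2 * r.2.2)))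
    (hΨreal : ∀ p ∈ Dom I0 (2 * r.1, 2 * r.2.1, 2 * r.2.2),
      IsRealVec p.1 → IsRealVec p.2 → IsRealVec (Ψ p).1 ∧ IsRealVec (Ψ p).2)
    (hΨid : ∀ p ∈ Dom I0 (2 * r.1, 2 * r.2.1, 2 * r.2.2),
      pNorm (Ψ p - p) ≤ 18 * m * r.2.1 / r.1 * (ε * T)) :
    ∀ w : CVec n × CVec N, IsRealVec w.1 → IsRealVec w.2 → w ∈ Dom I0 r →
      ∃ p : CVec n × CVec N, IsRealVec p.1 ∧ IsRealVec p.2 ∧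
        p ∈ Dom I0 (5 / 3 * r.1, 5 / 3 * r.2.1, 5 / 3 * r.2.2) ∧ Ψ p = w := by
  intro w hw₁ hw₂ hw
  obtain ⟨hr₁, hr₂, -⟩ := hr
  have hc₁ : r.1 < r.2.1 ^ 2 / 4 := hc1.trans_le (min_le_left _ _)
  have hc₂ : r.1 < 2 * r.2.1 * r.2.2 := hc1.trans_le (min_le_right _ _)
  set μ := 18 * m * r.2.1 / r.1 * (ε * T)
  set ρ := r.1 / (6 * r.2.1)
  have hμ : 0 ≤ μ := by positivity
  have hμr : 216 * r.2.1 * μ ≤ r.1 := by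
    refine mul_mul_div_mul_le_of_sq_mul_lt m (by positivity) hr₁ ?_
    rw [← mul_assoc]
    exact ((lt_div_iff₀ (by positivity)).mp hc6).trans_le
      (mul_le_mul_of_nonneg_right (min_le_left _ _) (sq_nonneg _))
  have hρr : 6 * r.2.1 * ρ = r.1 := by simp only [ρ]; field_simp
  have hD₂ : ∀ p, pNorm (p - w) < μ + ρ → p ∈ Dom I0 (2 * r.1, 2 * r.2.1, 2 * r.2.2) :=
    fun p hp => mem_Dom_smul_of_pNorm_sub_le hw hc₁ hc₂ le_rfl (by linarith) hp.le
  obtain ⟨p, ⟨hp₁, hp₂⟩, hpw, rfl⟩ := exists_pNorm_sub_le_apply_eq (Ψ := Ψ) ⟨hw₁, hw₂⟩ hμ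
    (lt_of_mul_lt_mul_left (by linarith) hr₂.le)
    (hΨana.differentiableOn.mono hD₂)
    (fun p hp hpw => hΨreal p (hD₂ p hpw) hp.1 hp.2) (fun p hp => hΨid p (hD₂ p hp))
  exact ⟨p, hp₁, hp₂,
    mem_Dom_smul_of_pNorm_sub_le hw hc₁ hc₂ (by norm_num) (by linarith) hpw, rfl⟩

/-- **Covering property of the normalizing transformation (coupled case).** Under the
hypotheses of the small-`κ` stability lemma, the real analytic symplectic transformation
`Ψ : D_{2r} → D_{3r}` with `|Ψ − id|_{2r} ≤ (18mr₂/r₁)εT` covers: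
`Ψ(D^{real}_{5r/3}) ⊇ D^{real}_r`. -/
theorem covering_normalizing_map_coupled (n N : ℕ) (ω I0 : Fin n → ℝ)
    (A : Matrix (Fin n) (Fin n) ℝ) (M T κ ε CΛ : ℝ) (r : ℝ × ℝ × ℝ) (m : ℕ)
    (Ψ : CVec n × CVec N → CVec n × CVec N)
    (hA : A.IsSymm) (hM : 0 < M) (hT : 0 < T) (hκ : 0 < κ) (hε : 0 < ε) (hCΛ : 0 < CΛ)
    (hm : 0 < m) (hr : 0 < r.1 ∧ 0 < r.2.1 ∧ 0 < r.2.2)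
    (hconv : ∀ I : Fin n → ℝ, (1 / M) * (l1Norm I) ^ 2 ≤ ∑ i, ∑ j, A i j * I i * I j)
    (hper : ∀ j, ∃ mz : ℤ, T * ω j = 2 * Real.pi * mz)
    -- hypotheses of the small-κ stability lemma
    (hc1 : r.1 < min (r.2.1 ^ 2 / 4) (2 * r.2.1 * r.2.2))
    (hc2 : ε * M < (1 / 2200) * r.1 ^ 2)
    (hc3 : l1Norm I0 < r.2.1 ^ 2 / 16)
    (hc4 : r.1 ^ 2 ≤ 4 * κ * M * r.2.2 ^ 2)
    (hc5 : 54 * m * l1OpNorm A * r.1 * T ≤ 1 / 6)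
    (hc6 : (m : ℝ) ^ 2 * ε * T <
      min (1 / 3888) (1 / (480 * Real.sqrt (M * l1OpNorm A))) * r.1 ^ 2 / r.2.1 ^ 2)
    (hc7 : CΛ * κ * m * T ≤ r.1 / (54 * r.2.1 * r.2.2))
    -- Ψ is the real analytic symplectic transformation from the normal form lemma
    (hΨana : AnalyticOnNhd ℂ Ψ (Dom I0 (2 * r.1, 2 * r.2.1, 2 * r.2.2)))
    (hΨmaps : Set.MapsTo Ψ (Dom I0 (2 * r.1, 2 * r.2.1, 2 * r.2.2))
      (Dom I0 (3 * r.1, 3 * r.2.1, 3 * r.2.2)))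
    (hΨreal : ∀ p ∈ Dom I0 (2 * r.1, 2 * r.2.1, 2 * r.2.2),
      IsRealVec p.1 → IsRealVec p.2 → IsRealVec (Ψ p).1 ∧ IsRealVec (Ψ p).2)
    (hΨsymp : IsSymplecticOn Ψ (Dom I0 (2 * r.1, 2 * r.2.1, 2 * r.2.2)))
    (hΨid : ∀ p ∈ Dom I0 (2 * r.1, 2 * r.2.1, 2 * r.2.2),
      pNorm (Ψ p - p) ≤ 18 * m * r.2.1 / r.1 * (ε * T)) :
    ∀ w : CVec n × CVec N, IsRealVec w.1 → IsRealVec w.2 → w ∈ Dom I0 r →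
      ∃ p : CVec n × CVec N, IsRealVec p.1 ∧ IsRealVec p.2 ∧
        p ∈ Dom I0 (5 / 3 * r.1, 5 / 3 * r.2.1, 5 / 3 * r.2.2) ∧ Ψ p = w :=
  covering_normalizing_map_coupled_general n N I0 A M T ε r m Ψ hT hε hr hc1 hc6 hΨana hΨreal hΨid
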